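/- arXiv:1705.07372 — 7 statements merged into one kernel-verified Lean document; each statement's English description precedes it below -/
import Mathlib

section
/- Let d ≥ 1, let Ω ⊂ ℝ^d be an open bounded set which is regular open (Ω equals the interior of its closure) and such that ℝ^d ∖ closure(Ω) is connected, and let X ⊆ closure(Ω). Then the outer support X• is a closed set with X ⊆ X• and with ℝ^d ∖ X• connected, and X• is the smallest such set: for every closed set C with X ⊆ C ⊆ closure(Ω) and ℝ^d ∖ C connected, one has X• ⊆ C. -/
open Set Topology

/-- The outer support of `X` with respect to the domain `Ω`:
`X• = closure Ω \ ⋃ {U ⊆ ℝ^d \ X : U open and connected, U ∩ ∂Ω ≠ ∅}`. -/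
def outerSupport {d : ℕ} (Ω X : Set (EuclideanSpace ℝ (Fin d))) :
    Set (EuclideanSpace ℝ (Fin d)) :=
  closure Ω \ ⋃₀ {U : Set (EuclideanSpace ℝ (Fin d)) |
    U ⊆ Xᶜ ∧ IsOpen U ∧ IsConnected U ∧ (U ∩ frontier Ω).Nonempty}

/-- A preconnected set meeting both `t` and `tᶜ` meets `frontier t`. -/
lemma aux_inter_frontier_nonempty {α : Type*} [TopologicalSpace α] {s t : Set α}
    (hs : IsPreconnected s) (h1 : (s ∩ t).Nonempty) (h2 : (s ∩ tᶜ).Nonempty) :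
    (s ∩ frontier t).Nonempty := by
  by_contra h
  rw [not_nonempty_iff_eq_empty] at h
  have hsub : s ⊆ interior t ∪ interior tᶜ := by
    intro x hx
    have hxf : x ∉ frontier t := fun hf => (eq_empty_iff_forall_notMem.1 h x) ⟨hx, hf⟩
    by_cases hxt : x ∈ closure t
    · left
      rcases em (x ∈ interior t) with h' | h'
      · exact h'
      · exact absurd ⟨hxt, h'⟩ hxf
    · right
      rwa [interior_compl, mem_compl_iff]
  have h1' : (s ∩ interior t).Nonempty := by
    obtain ⟨x, hxs, hxt⟩ := h1
    rcases hsub hxs with h' | h'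
    · exact ⟨x, hxs, h'⟩
    · exact absurd hxt (fun hh => interior_subset h' hh)
  have h2' : (s ∩ interior tᶜ).Nonempty := by
    obtain ⟨x, hxs, hxt⟩ := h2
    rcases hsub hxs with h' | h'
    · exact absurd (interior_subset h') hxt
    · exact ⟨x, hxs, h'⟩
  obtain ⟨x, hxs, hx1, hx2⟩ := hs (interior t) (interior tᶜ) isOpen_interior isOpen_interior
    hsub h1' h2'
  exact (interior_subset hx2) (interior_subset hx1)

theorem outerSupport_smallest_closed_connected_complement
    (d : ℕ) (hd : 1 ≤ d) (Ω X : Set (EuclideanSpace ℝ (Fin d)))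
    (hΩopen : IsOpen Ω) (hΩbdd : Bornology.IsBounded Ω)
    (hΩreg : Ω = interior (closure Ω))
    (hΩcc : IsConnected (closure Ω)ᶜ)
    (hX : X ⊆ closure Ω) :
    IsClosed (outerSupport Ω X) ∧ X ⊆ outerSupport Ω X ∧
      IsConnected (outerSupport Ω X)ᶜ ∧
      ∀ C : Set (EuclideanSpace ℝ (Fin d)), IsClosed C → X ⊆ C → C ⊆ closure Ω →
        IsConnected Cᶜ → outerSupport Ω X ⊆ C := by
  set 𝒰 : Set (Set (EuclideanSpace ℝ (Fin d))) :=
    {U : Set (EuclideanSpace ℝ (Fin d)) |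
      U ⊆ Xᶜ ∧ IsOpen U ∧ IsConnected U ∧ (U ∩ frontier Ω).Nonempty} with h𝒰
  have hdef : outerSupport Ω X = closure Ω \ ⋃₀ 𝒰 := rfl
  -- frontier of closure Ω is frontier Ω
  have hfr : frontier (closure Ω) = frontier Ω := by
    rw [frontier, closure_closure, ← hΩreg, hΩopen.frontier_eq]
  have hSopen : IsOpen (⋃₀ 𝒰) := isOpen_sUnion fun U hU => hU.2.1
  -- each member of 𝒰 meets (closure Ω)ᶜ
  have hmeet : ∀ U ∈ 𝒰, ((closure Ω)ᶜ ∩ U).Nonempty := by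
    rintro U ⟨hUX, hUo, hUc, y, hyU, hyF⟩
    by_contra h
    rw [not_nonempty_iff_eq_empty] at h
    have hUsub : U ⊆ closure Ω := by
      intro z hz
      by_contra hz'
      exact (eq_empty_iff_forall_notMem.1 h z) ⟨hz', hz⟩
    have : U ⊆ interior (closure Ω) := hUo.subset_interior_iff.2 hUsub
    have hyΩ : y ∈ Ω := by rw [hΩreg]; exact this hyU
    rw [hΩopen.frontier_eq] at hyF
    exact hyF.2 hyΩ
  refine ⟨?_, ?_, ?_, ?_⟩
  · exact isClosed_closure.sdiff hSopen
  · intro x hx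
    refine ⟨hX hx, ?_⟩
    rintro ⟨U, hU, hxU⟩
    exact hU.1 hxU hx
  · -- complement is (closure Ω)ᶜ ∪ ⋃₀ 𝒰
    have hcompl : (outerSupport Ω X)ᶜ = (closure Ω)ᶜ ∪ ⋃₀ 𝒰 := by
      rw [hdef, diff_eq, compl_inter, compl_compl]
    rw [hcompl]
    obtain ⟨x₀, hx₀⟩ := hΩcc.nonempty
    constructor
    · exact ⟨x₀, Or.inl hx₀⟩
    · have key : (closure Ω)ᶜ ∪ ⋃₀ 𝒰 =
          ⋃₀ (insert (closure Ω)ᶜ ((fun U => (closure Ω)ᶜ ∪ U) '' 𝒰)) := by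
        ext z
        simp only [mem_union, mem_sUnion, mem_insert_iff, mem_image]
        constructor
        · rintro (hz | ⟨U, hU, hz⟩)
          · exact ⟨(closure Ω)ᶜ, Or.inl rfl, hz⟩
          · exact ⟨(closure Ω)ᶜ ∪ U, Or.inr ⟨U, hU, rfl⟩, Or.inr hz⟩
        · rintro ⟨t, (rfl | ⟨U, hU, rfl⟩), hz⟩
          · exact Or.inl hz
          · rcases hz with hz | hz
            · exact Or.inl hz
            · exact Or.inr ⟨U, hU, hz⟩
      rw [key]
      apply isPreconnected_sUnion x₀
      · rintro s (rfl | ⟨U, hU, rfl⟩)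
        · exact hx₀
        · exact Or.inl hx₀
      · rintro s (rfl | ⟨U, hU, rfl⟩)
        · exact hΩcc.isPreconnected
        · exact (IsConnected.union (hmeet U hU) hΩcc hU.2.2.1).isPreconnected
  · intro C hCclosed hXC hCΩ hCc x hx
    by_contra hxC
    have hCmem : Cᶜ ∈ 𝒰 := by
      refine ⟨compl_subset_compl.2 hXC, hCclosed.isOpen_compl, hCc, ?_⟩
      have h1 : (Cᶜ ∩ closure Ω).Nonempty := ⟨x, hxC, hx.1⟩
      have h2 : (Cᶜ ∩ (closure Ω)ᶜ).Nonempty := by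
        obtain ⟨y, hy⟩ := hΩcc.nonempty
        exact ⟨y, compl_subset_compl.2 hCΩ hy, hy⟩
      have := aux_inter_frontier_nonempty hCc.isPreconnected h1 h2
      rwa [hfr] at this
    exact hx.2 ⟨Cᶜ, hCmem, hxC⟩
end

section
/- Let d ≥ 1, let Ω ⊂ ℝ^d be an open bounded set which is regular open (Ω equals the interior of its closure) and such that ℝ^d ∖ closure(Ω) is connected, and let X ⊆ closure(Ω). If in addition ℝ^d ∖ closure(X) is connected, then the outer support satisfies X• = closure(X). -/
open Set Topology

theorem outerSupport_eq_closure_of_connected_complement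
    (d : ℕ) (hd : 1 ≤ d) (Ω X : Set (EuclideanSpace ℝ (Fin d)))
    (hΩopen : IsOpen Ω) (hΩbdd : Bornology.IsBounded Ω)
    (hΩreg : Ω = interior (closure Ω))
    (hΩcc : IsConnected (closure Ω)ᶜ)
    (hX : X ⊆ closure Ω)
    (hXcc : IsConnected (closure X)ᶜ) :
    outerSupport Ω X = closure X := by
  unfold outerSupport
  apply Subset.antisymm
  · rintro z ⟨hzΩ, hzU⟩
    by_contra hzX
    by_cases hfr : (((closure X)ᶜ : Set (EuclideanSpace ℝ (Fin d))) ∩ frontier Ω).Nonempty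
    · exact hzU ⟨(closure X)ᶜ,
        ⟨fun y hy hyX => hy (subset_closure hyX), isClosed_closure.isOpen_compl, hXcc, hfr⟩, hzX⟩
    · have hfr' : frontier Ω ⊆ closure X := by
        intro y hy
        by_contra h
        exact hfr ⟨y, h, hy⟩
      have hXΩ : closure X ⊆ closure Ω := closure_minimal hX isClosed_closure
      have hmemΩ : ∀ w, w ∈ closure Ω → w ∉ closure X → w ∈ Ω := by
        intro w hwΩ hwX
        rw [closure_eq_interior_union_frontier, hΩopen.interior_eq] at hwΩ
        rcases hwΩ with h | h
        · exact h
        · exact absurd (hfr' h) hwX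
      have hzΩ' : z ∈ Ω := hmemΩ z hzΩ hzX
      rcases hΩcc.nonempty with ⟨a, ha⟩
      have haX : a ∉ closure X := fun h => ha (hXΩ h)
      have hsep := hXcc.isPreconnected (closure Ω)ᶜ (Ω \ closure X)
        isClosed_closure.isOpen_compl (hΩopen.sdiff isClosed_closure)
        (by
          intro w hw
          by_cases hwΩ : w ∈ closure Ω
          · exact Or.inr ⟨hmemΩ w hwΩ hw, hw⟩
          · exact Or.inl hwΩ)
        ⟨a, haX, ha⟩ ⟨z, hzX, hzΩ', hzX⟩
      rcases hsep with ⟨w, _, hwA, hwB⟩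
      exact hwA (subset_closure hwB.1)
  · intro x hx
    refine ⟨closure_minimal hX isClosed_closure hx, ?_⟩
    rintro ⟨V, ⟨hVsub, hVopen, -, -⟩, hxV⟩
    have : closure X ⊆ Vᶜ :=
      closure_minimal (fun y hy hyV => hVsub hyV hy) hVopen.isClosed_compl
    exact this hx hxV
end

section
/- Let d ≥ 1, let Ω ⊂ ℝ^d be an open bounded set which is regular open (Ω equals the interior of its closure) and such that ℝ^d ∖ closure(Ω) is connected. If C ⊆ closure(Ω) is closed and ℝ^d ∖ C is connected, then the outer support of C equals C itself: C• = C. -/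
open Set Topology

theorem outerSupport_of_closed_connected_complement
    (d : ℕ) (hd : 1 ≤ d) (Ω C : Set (EuclideanSpace ℝ (Fin d)))
    (hΩopen : IsOpen Ω) (hΩbdd : Bornology.IsBounded Ω)
    (hΩreg : Ω = interior (closure Ω))
    (hΩcc : IsConnected (closure Ω)ᶜ)
    (hC : C ⊆ closure Ω) (hCclosed : IsClosed C)
    (hCcc : IsConnected Cᶜ) :
    outerSupport Ω C = C := by
  unfold outerSupport
  by_cases hfr : frontier Ω ⊆ C
  · -- the family is empty, and C = closure Ω
    have hU : ⋃₀ {U : Set (EuclideanSpace ℝ (Fin d)) |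
        U ⊆ Cᶜ ∧ IsOpen U ∧ IsConnected U ∧ (U ∩ frontier Ω).Nonempty} = ∅ := by
      ext y
      simp only [mem_sUnion, mem_empty_iff_false, iff_false, not_exists]
      rintro U ⟨⟨hUC, -, -, z, hz, hzfr⟩, -⟩
      exact hUC hz (hfr hzfr)
    rw [hU, diff_empty]
    have hΩC : Ω ⊆ C := by
      by_contra h
      obtain ⟨x, hxΩ, hxC⟩ := not_subset.mp h
      haveI : Nonempty (Fin d) := ⟨⟨0, hd⟩⟩
      have hbdd : Bornology.IsBounded (closure Ω) := hΩbdd.closure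
      have hex : ∃ y : EuclideanSpace ℝ (Fin d), y ∉ closure Ω := by
        by_contra h'
        push_neg at h'
        have huniv : closure Ω = univ := eq_univ_of_forall h'
        rw [huniv] at hbdd
        exact NormedSpace.unbounded_univ ℝ (EuclideanSpace ℝ (Fin d)) hbdd
      obtain ⟨y, hy⟩ := hex
      have hsub : Cᶜ ⊆ (closure Ω)ᶜ ∪ Ω := by
        intro z hz
        by_cases hzc : z ∈ closure Ω
        · by_cases hzΩ : z ∈ Ω
          · exact Or.inr hzΩ
          · exact absurd (hfr ⟨hzc, by rwa [hΩopen.interior_eq]⟩) hz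
        · exact Or.inl hzc
      have hsep := hCcc.isPreconnected (closure Ω)ᶜ Ω
        isClosed_closure.isOpen_compl hΩopen hsub
        ⟨y, fun hyC => hy (hC hyC), hy⟩ ⟨x, hxC, hxΩ⟩
      obtain ⟨z, -, hz1, hz2⟩ := hsep
      exact hz1 (subset_closure hz2)
    exact Subset.antisymm (closure_minimal hΩC hCclosed) hC
  · obtain ⟨x, hxfr, hxC⟩ := not_subset.mp hfr
    ext y
    simp only [mem_diff, mem_sUnion]
    constructor
    · rintro ⟨hyΩ, hnot⟩
      by_contra hyC
      exact hnot ⟨Cᶜ, ⟨subset_rfl, hCclosed.isOpen_compl, hCcc, ⟨x, hxC, hxfr⟩⟩, hyC⟩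
    · intro hyC
      refine ⟨hC hyC, ?_⟩
      rintro ⟨U, ⟨hUC, -, -, -⟩, hyU⟩
      exact hUC hyU hyC
end

section
/- Let d ≥ 1, let Ω ⊂ ℝ^d be an open bounded set which is regular open (Ω equals the interior of its closure) and such that ℝ^d ∖ closure(Ω) is connected, and let X ⊆ closure(Ω). Assume ∂Ω ⊄ closure(X), i.e., there exists a point of ∂Ω not in closure(X). Then the set W = ⋃{U ⊆ ℝ^d ∖ X : U open and connected, U ∩ ∂Ω ≠ ∅} is nonempty, open, and connected, it contains ℝ^d ∖ closure(Ω), and consequently X• = ℝ^d ∖ W; in particular ℝ^d ∖ X• is connected. -/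
open Set Topology

theorem outerSupport_complement_union
    (d : ℕ) (hd : 1 ≤ d) (Ω X : Set (EuclideanSpace ℝ (Fin d)))
    (hΩopen : IsOpen Ω) (hΩbdd : Bornology.IsBounded Ω)
    (hΩreg : Ω = interior (closure Ω))
    (hΩcc : IsConnected (closure Ω)ᶜ)
    (hX : X ⊆ closure Ω)
    (hfr : ¬ frontier Ω ⊆ closure X)
    (W : Set (EuclideanSpace ℝ (Fin d)))
    (hW : W = ⋃₀ {U : Set (EuclideanSpace ℝ (Fin d)) |
      U ⊆ Xᶜ ∧ IsOpen U ∧ IsConnected U ∧ (U ∩ frontier Ω).Nonempty}) :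
    W.Nonempty ∧ IsOpen W ∧ IsConnected W ∧ (closure Ω)ᶜ ⊆ W ∧
      outerSupport Ω X = Wᶜ ∧ IsConnected (outerSupport Ω X)ᶜ := by
  set C : Set (EuclideanSpace ℝ (Fin d)) := (closure Ω)ᶜ with hC
  have hCopen : IsOpen C := isClosed_closure.isOpen_compl
  -- every point of the frontier is in the closure of C, by regular openness
  have hfrC : ∀ y ∈ frontier Ω, y ∈ closure C := by
    intro y hy
    rw [hC, closure_compl, ← hΩreg]
    exact fun h => hy.2 (by rwa [hΩopen.interior_eq])
  -- pick x on the frontier, outside closure X, and a ball around it avoiding X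
  obtain ⟨x, hxfr, hxX⟩ := not_subset.mp hfr
  obtain ⟨ε, hε, hball⟩ :=
    Metric.isOpen_iff.mp isClosed_closure.isOpen_compl x hxX
  set B := Metric.ball x ε with hB
  have hBconn : IsConnected B :=
    ⟨⟨x, Metric.mem_ball_self hε⟩, (convex_ball x ε).isPreconnected⟩
  have hBC : (B ∩ C).Nonempty := by
    obtain ⟨z, hz⟩ := mem_closure_iff.mp (hfrC x hxfr) B Metric.isOpen_ball
      (Metric.mem_ball_self hε)
    exact ⟨z, hz⟩
  have hCconn : IsConnected C := hΩcc
  -- the basic member U₀ = C ∪ B of the family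
  set U₀ := C ∪ B with hU₀
  have hU₀mem : U₀ ∈ {U : Set (EuclideanSpace ℝ (Fin d)) |
      U ⊆ Xᶜ ∧ IsOpen U ∧ IsConnected U ∧ (U ∩ frontier Ω).Nonempty} := by
    refine ⟨?_, hCopen.union Metric.isOpen_ball, ?_, ⟨x, Or.inr (Metric.mem_ball_self hε), hxfr⟩⟩
    · rintro z (hz | hz)
      · exact fun hzX => hz (hX hzX)
      · exact fun hzX => hball hz (subset_closure hzX)
    · exact IsConnected.union (by rwa [inter_comm] at hBC) hCconn hBconn
  have hCW : C ⊆ W := by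
    rw [hW]
    exact subset_trans subset_union_left (subset_sUnion_of_mem hU₀mem)
  -- every member of the family meets C
  have hmeetC : ∀ U ∈ {U : Set (EuclideanSpace ℝ (Fin d)) |
      U ⊆ Xᶜ ∧ IsOpen U ∧ IsConnected U ∧ (U ∩ frontier Ω).Nonempty},
      (U ∩ C).Nonempty := by
    rintro U ⟨-, hUo, -, y, hyU, hyfr⟩
    exact mem_closure_iff.mp (hfrC y hyfr) U hUo hyU
  obtain ⟨c, hc⟩ := hCconn.nonempty
  have hcW : c ∈ W := hCW hc
  -- W is connected: it equals the union of the sets U ∪ C, all containing c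
  have hWconn : IsConnected W := by
    refine ⟨⟨c, hcW⟩, ?_⟩
    have hWeq : W = ⋃₀ {t | ∃ U ∈ {U : Set (EuclideanSpace ℝ (Fin d)) |
        U ⊆ Xᶜ ∧ IsOpen U ∧ IsConnected U ∧ (U ∩ frontier Ω).Nonempty}, t = U ∪ C} := by
      apply Set.Subset.antisymm
      · intro z hz
        rw [hW] at hz
        obtain ⟨U, hU, hzU⟩ := hz
        exact ⟨U ∪ C, ⟨U, hU, rfl⟩, Or.inl hzU⟩
      · rintro z ⟨t, ⟨U, hU, rfl⟩, hz | hz⟩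
        · rw [hW]; exact ⟨U, hU, hz⟩
        · exact hCW hz
    rw [hWeq]
    apply isPreconnected_sUnion c
    · rintro t ⟨U, hU, rfl⟩
      exact Or.inr hc
    · rintro t ⟨U, hU, rfl⟩
      exact (IsConnected.union (hmeetC U hU) hU.2.2.1 hCconn).isPreconnected
  have hWopen : IsOpen W := by
    rw [hW]; exact isOpen_sUnion fun U hU => hU.2.1
  -- outerSupport = Wᶜ
  have hout : outerSupport Ω X = Wᶜ := by
    rw [outerSupport, ← hW, diff_eq,
      inter_eq_self_of_subset_right (compl_subset_comm.mp hCW)]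
  refine ⟨⟨c, hcW⟩, hWopen, hWconn, hCW, hout, ?_⟩
  rw [hout, compl_compl]
  exact hWconn
end

section
/- Let d ≥ 1, let Ω ⊂ ℝ^d be an open bounded set which is regular open (Ω equals the interior of its closure) and such that ℝ^d ∖ closure(Ω) is connected, and let X ⊆ closure(Ω). Then the topological frontier of the outer support is contained in the topological frontier of X: ∂(X•) ⊆ ∂X. -/
open Set Topology

/-- A preconnected set meeting a closed set and its complement meets its frontier. -/
lemma aux_preconnected_frontier {α : Type*} [TopologicalSpace α] {s t : Set α}
    (hs : IsPreconnected s) (ht : IsClosed t)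
    (h1 : (s ∩ t).Nonempty) (h2 : (s \ t).Nonempty) :
    (s ∩ frontier t).Nonempty := by
  by_contra h
  rw [not_nonempty_iff_eq_empty] at h
  have hsub : s ⊆ interior t ∪ tᶜ := by
    intro z hz
    by_cases hzt : z ∈ t
    · left
      by_contra hzi
      have : z ∈ frontier t := ⟨subset_closure hzt, hzi⟩
      exact absurd h (Nonempty.ne_empty ⟨z, hz, this⟩)
    · exact Or.inr hzt
  rcases hs.subset_or_subset isOpen_interior ht.isOpen_compl
      (disjoint_compl_right.mono_left interior_subset) hsub with hc | hc
  · obtain ⟨y, hy⟩ := h2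
    exact hy.2 (interior_subset (hc hy.1))
  · obtain ⟨y, hy⟩ := h1
    exact hc hy.1 hy.2

theorem frontier_outerSupport_subset_frontier
    (d : ℕ) (hd : 1 ≤ d) (Ω X : Set (EuclideanSpace ℝ (Fin d)))
    (hΩopen : IsOpen Ω) (hΩbdd : Bornology.IsBounded Ω)
    (hΩreg : Ω = interior (closure Ω))
    (hΩcc : IsConnected (closure Ω)ᶜ)
    (hX : X ⊆ closure Ω) :
    frontier (outerSupport Ω X) ⊆ frontier X := by
  set S : Set (Set (EuclideanSpace ℝ (Fin d))) :=
    {U : Set (EuclideanSpace ℝ (Fin d)) |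
      U ⊆ Xᶜ ∧ IsOpen U ∧ IsConnected U ∧ (U ∩ frontier Ω).Nonempty} with hS
  set G : Set (EuclideanSpace ℝ (Fin d)) := ⋃₀ S with hG
  have hGX : G ⊆ Xᶜ := sUnion_subset fun U hU => hU.1
  have hXsub : X ⊆ outerSupport Ω X := fun z hz => ⟨hX hz, fun hg => hGX hg hz⟩
  intro x hx
  have hxc : x ∈ closure (outerSupport Ω X) := hx.1
  have hxi : x ∉ interior (outerSupport Ω X) := hx.2
  refine ⟨?_, fun h => hxi (interior_mono hXsub h)⟩
  by_contra hxcl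
  -- get a ball around x disjoint from X
  have hxopen : x ∈ (closure X)ᶜ := hxcl
  obtain ⟨ε, hε, hball⟩ := Metric.isOpen_iff.mp isClosed_closure.isOpen_compl x hxopen
  set B := Metric.ball x ε with hB
  have hBX : B ⊆ Xᶜ := fun z hz => fun hzX => hball hz (subset_closure hzX)
  have hBconn : IsConnected B :=
    (convex_ball x ε).isConnected (Metric.nonempty_ball.mpr hε)
  have hxB : x ∈ B := Metric.mem_ball_self hε
  -- x is in closure Ω
  have hxΩ : x ∈ closure Ω := by
    have : closure (outerSupport Ω X) ⊆ closure Ω := by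
      rw [← closure_closure (s := Ω)]
      exact closure_mono diff_subset
    exact this hxc
  by_cases hBG : (B ∩ G).Nonempty
  · -- B meets G; enlarge a member of S by B, so B ⊆ G, contradicting x ∈ closure X•
    obtain ⟨y, hyB, hyG⟩ := hBG
    obtain ⟨U, hU, hyU⟩ := hyG
    have hW : U ∪ B ∈ S := by
      refine ⟨union_subset hU.1 hBX, hU.2.1.union Metric.isOpen_ball,
        hU.2.2.1.union ⟨y, hyU, hyB⟩ hBconn, ?_⟩
      obtain ⟨z, hz⟩ := hU.2.2.2
      exact ⟨z, Or.inl hz.1, hz.2⟩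
    have hBsubG : B ⊆ G := fun z hz => ⟨U ∪ B, hW, Or.inr hz⟩
    obtain ⟨z, hzB, hzO⟩ :=
      mem_closure_iff.mp hxc B Metric.isOpen_ball hxB
    exact hzO.2 (hBsubG hzB)
  · by_cases hB2 : B ⊆ closure Ω
    · -- B ⊆ X•, so x ∈ interior X•, contradiction
      have : B ⊆ outerSupport Ω X := fun z hz =>
        ⟨hB2 hz, fun hg => hBG ⟨z, hz, hg⟩⟩
      exact hxi (mem_interior.mpr ⟨B, this, Metric.isOpen_ball, hxB⟩)
    · -- B sticks out of closure Ω; then B ∪ (closure Ω)ᶜ ∈ S, so x ∈ G, contradiction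
      obtain ⟨y, hyB, hyΩ⟩ := not_subset.mp hB2
      have hfr : (B ∩ frontier (closure Ω)).Nonempty :=
        aux_preconnected_frontier hBconn.isPreconnected isClosed_closure
          ⟨x, hxB, hxΩ⟩ ⟨y, hyB, hyΩ⟩
      obtain ⟨z, hzB, hzfr⟩ := hfr
      have hW : B ∪ (closure Ω)ᶜ ∈ S := by
        refine ⟨union_subset hBX fun w hw => fun hwX => hw (hX hwX),
          Metric.isOpen_ball.union isClosed_closure.isOpen_compl,
          hBconn.union ⟨y, hyB, hyΩ⟩ hΩcc, ?_⟩
        exact ⟨z, Or.inl hzB, frontier_closure_subset hzfr⟩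
      exact hBG ⟨x, hxB, ⟨B ∪ (closure Ω)ᶜ, hW, Or.inl hxB⟩⟩
end

section
/- Let d ≥ 1, let Ω ⊂ ℝ^d be an open bounded set which is regular open (Ω equals the interior of its closure) and such that ℝ^d ∖ closure(Ω) is connected, and let X ⊆ closure(Ω). For every open set U ⊆ ℝ^d with U ∩ X• ≠ ∅: (i) if U ∩ ∂(X•) ≠ ∅ then X ⊄ X• ∖ U; (ii) if U ∩ ∂(X•) = ∅ (and U ∩ X• ≠ ∅) then ℝ^d ∖ (X• ∖ U) is not connected. In particular, no proper closed subset of X• obtained by removing an open set both contains X and has connected complement. -/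
open Set Topology

/-- A preconnected set meeting both `t` and its complement meets the frontier of `t`. -/
lemma preconn_inter_frontier_nonempty {α : Type*} [TopologicalSpace α] {s t : Set α}
    (hs : IsPreconnected s) (h1 : (s ∩ t).Nonempty) (h2 : (s \ t).Nonempty) :
    (s ∩ frontier t).Nonempty := by
  by_contra h
  rw [not_nonempty_iff_eq_empty] at h
  have hnf : ∀ x ∈ s, x ∉ frontier t := fun x hx hf =>
    (eq_empty_iff_forall_notMem.mp h x) ⟨hx, hf⟩
  have hsub : s ⊆ interior t ∪ (closure t)ᶜ := by
    intro x hx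
    by_cases hxt : x ∈ closure t
    · left
      by_contra hi
      exact hnf x hx ⟨hxt, hi⟩
    · exact Or.inr hxt
  obtain ⟨x, hxs, hxt⟩ := h1
  have hxint : x ∈ interior t := by
    by_contra hi
    exact hnf x hxs ⟨subset_closure hxt, hi⟩
  obtain ⟨y, hys, hyt⟩ := h2
  have hyc : y ∈ (closure t)ᶜ := by
    intro hyc
    exact hnf y hys ⟨hyc, fun hi => hyt (interior_subset hi)⟩
  obtain ⟨z, _, hz1, hz2⟩ := hs (interior t) (closure t)ᶜ isOpen_interior
    (isOpen_compl_iff.mpr isClosed_closure) hsub ⟨x, hxs, hxint⟩ ⟨y, hys, hyc⟩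
  exact hz2 (subset_closure (interior_subset hz1))

theorem outerSupport_minimality_via_open_removal
    (d : ℕ) (hd : 1 ≤ d) (Ω X : Set (EuclideanSpace ℝ (Fin d)))
    (hΩopen : IsOpen Ω) (hΩbdd : Bornology.IsBounded Ω)
    (hΩreg : Ω = interior (closure Ω))
    (hΩcc : IsConnected (closure Ω)ᶜ)
    (hX : X ⊆ closure Ω) :
    ∀ U : Set (EuclideanSpace ℝ (Fin d)), IsOpen U →
      (U ∩ outerSupport Ω X).Nonempty →
      ((U ∩ frontier (outerSupport Ω X)).Nonempty → ¬ X ⊆ outerSupport Ω X \ U) ∧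
      (U ∩ frontier (outerSupport Ω X) = ∅ → ¬ IsConnected (outerSupport Ω X \ U)ᶜ) ∧
      ¬ (X ⊆ outerSupport Ω X \ U ∧ IsConnected (outerSupport Ω X \ U)ᶜ) := by
  intro U hUopen hUS
  set 𝒰 : Set (Set (EuclideanSpace ℝ (Fin d))) :=
    {V | V ⊆ Xᶜ ∧ IsOpen V ∧ IsConnected V ∧ (V ∩ frontier Ω).Nonempty} with h𝒰
  have hGopen : IsOpen (⋃₀ 𝒰) := isOpen_sUnion fun V hV => hV.2.1
  have hSdef : outerSupport Ω X = closure Ω \ ⋃₀ 𝒰 := rfl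
  set S := outerSupport Ω X with hS
  have hSclosed : IsClosed S := by
    rw [hSdef]; exact isClosed_closure.sdiff hGopen
  have hfr : frontier (closure Ω) = frontier Ω := by
    rw [frontier, frontier, closure_closure, ← hΩreg, hΩopen.interior_eq]
  have hScomp_ne : Sᶜ.Nonempty := by
    obtain ⟨z, hz⟩ := hΩcc.nonempty
    exact ⟨z, fun hzS => hz (hSdef ▸ hzS).1⟩
  have part1 : (U ∩ frontier S).Nonempty → ¬ X ⊆ S \ U := by
    rintro ⟨p, hpU, hpfr⟩ hXsub
    have hUX : U ⊆ Xᶜ := fun x hxU hxX => (hXsub hxX).2 hxU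
    have hpS : p ∈ S := hSclosed.frontier_subset hpfr
    obtain ⟨ε, hε, hball⟩ := Metric.isOpen_iff.mp hUopen p hpU
    have hpcl : p ∈ closure Sᶜ := by
      rw [closure_compl]; exact hpfr.2
    obtain ⟨q, hqB, hqS⟩ :=
      mem_closure_iff.mp hpcl _ Metric.isOpen_ball (Metric.mem_ball_self hε)
    have hBconn : IsConnected (Metric.ball p ε) :=
      ⟨⟨p, Metric.mem_ball_self hε⟩, (convex_ball p ε).isPreconnected⟩
    have hBX : Metric.ball p ε ⊆ Xᶜ := fun x hx => hUX (hball hx)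
    have hpG : p ∉ ⋃₀ 𝒰 := (hSdef ▸ hpS).2
    rcases Classical.em (q ∈ closure Ω) with hq | hq
    · -- then q lies in some element of the family
      have hqG : q ∈ ⋃₀ 𝒰 := by
        by_contra h
        exact hqS (hSdef ▸ ⟨hq, h⟩)
      obtain ⟨W, hW, hqW⟩ := hqG
      have hmem : Metric.ball p ε ∪ W ∈ 𝒰 := by
        refine ⟨union_subset hBX hW.1, Metric.isOpen_ball.union hW.2.1,
          IsConnected.union ⟨q, hqB, hqW⟩ hBconn hW.2.2.1, ?_⟩
        obtain ⟨y, hy⟩ := hW.2.2.2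
        exact ⟨y, Or.inr hy.1, hy.2⟩
      exact hpG ⟨_, hmem, Or.inl (Metric.mem_ball_self hε)⟩
    · -- the ball crosses the frontier of Ω
      have hpΩ : p ∈ closure Ω := (hSdef ▸ hpS).1
      have hfrB : (Metric.ball p ε ∩ frontier (closure Ω)).Nonempty :=
        preconn_inter_frontier_nonempty hBconn.isPreconnected
          ⟨p, Metric.mem_ball_self hε, hpΩ⟩ ⟨q, hqB, hq⟩
      have hmem : Metric.ball p ε ∈ 𝒰 :=
        ⟨hBX, Metric.isOpen_ball, hBconn, hfr ▸ hfrB⟩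
      exact hpG ⟨_, hmem, Metric.mem_ball_self hε⟩
  have part2 : U ∩ frontier S = ∅ → ¬ IsConnected (S \ U)ᶜ := by
    intro hfrE hconn
    have hUSint : U ∩ S ⊆ interior S := by
      rintro x ⟨hxU, hxS⟩
      by_contra hi
      exact (eq_empty_iff_forall_notMem.mp hfrE x)
        ⟨hxU, ⟨subset_closure hxS, hi⟩⟩
    have hsub : (S \ U)ᶜ ⊆ Sᶜ ∪ (U ∩ interior S) := by
      intro x hx
      by_cases hxS : x ∈ S
      · right
        have hxU : x ∈ U := by
          by_contra hxU
          exact hx ⟨hxS, hxU⟩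
        exact ⟨hxU, hUSint ⟨hxU, hxS⟩⟩
      · exact Or.inl hxS
    obtain ⟨x0, hx0⟩ := hScomp_ne
    obtain ⟨y0, hy0U, hy0S⟩ := hUS
    obtain ⟨z, _, hz1, hz2, hz3⟩ := hconn.isPreconnected Sᶜ (U ∩ interior S)
      hSclosed.isOpen_compl (hUopen.inter isOpen_interior) hsub
      ⟨x0, fun h => hx0 h.1, hx0⟩
      ⟨y0, fun h => h.2 hy0U, hy0U, hUSint ⟨hy0U, hy0S⟩⟩
    exact hz1 (interior_subset hz3)
  refine ⟨part1, part2, fun ⟨h1, h2⟩ => ?_⟩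
  rcases eq_empty_or_nonempty (U ∩ frontier S) with he | hne
  · exact part2 he h2
  · exact part1 hne h1
end

section
/- Let d ≥ 2 and let Ω = B(0,2) ⊂ ℝ^d be the open ball of radius 2 centered at the origin. Let (s_j), (s_j'), (t_j), (t_j') be sequences in (0,1) with s_j < s_j' < t_j < t_j' < s_{j+1} for all j and with all four sequences converging to 1. Define the open annuli V_j = {x ∈ ℝ^d : s_j < |x| < s_j'} and W_j = {x ∈ ℝ^d : t_j < |x| < t_j'}, and set D₊ = ⋃_j V_j and D₋ = ⋃_j W_j. Then D₊ and D₋ are open and disjoint, and their outer supports (with respect to Ω) satisfy D₊• = D₋• = (D₊ ∪ D₋)• = closed unit ball {x ∈ ℝ^d : |x| ≤ 1}. -/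
open Set Topology Filter

lemma outerSupport_eq_closedBall_aux
    (d : ℕ) (hd : 2 ≤ d)
    (X : Set (EuclideanSpace ℝ (Fin d)))
    (hXsub : X ⊆ Metric.ball (0 : EuclideanSpace ℝ (Fin d)) 1)
    (r r' : ℕ → ℝ)
    (hrr' : ∀ j, r j < r' j) (hr'1 : ∀ j, r' j < 1)
    (hrlim : Tendsto r atTop (nhds 1))
    (hann : ∀ j (x : EuclideanSpace ℝ (Fin d)), r j < ‖x‖ → ‖x‖ < r' j → x ∈ X) :
    outerSupport (Metric.ball (0 : EuclideanSpace ℝ (Fin d)) 2) X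
      = Metric.closedBall (0 : EuclideanSpace ℝ (Fin d)) 1 := by
  haveI : Nonempty (Fin d) := ⟨⟨0, by omega⟩⟩
  have hrank : 1 < Module.rank ℝ (EuclideanSpace ℝ (Fin d)) := by
    rw [← Module.finrank_eq_rank, finrank_euclideanSpace_fin]
    exact_mod_cast (by omega : 1 < d)
  have h2 : (2 : ℝ) ≠ 0 := two_ne_zero
  have hclos : closure (Metric.ball (0 : EuclideanSpace ℝ (Fin d)) 2)
      = Metric.closedBall 0 2 := closure_ball 0 h2
  have hfront : frontier (Metric.ball (0 : EuclideanSpace ℝ (Fin d)) 2)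
      = Metric.sphere 0 2 := frontier_ball 0 h2
  set U₀ : Set (EuclideanSpace ℝ (Fin d)) := {x | 1 < ‖x‖} with hU₀def
  have hU₀open : IsOpen U₀ := isOpen_lt continuous_const continuous_norm
  have hU₀conn : IsConnected U₀ := by
    have h1 : IsConnected ((Metric.sphere (0 : EuclideanSpace ℝ (Fin d)) 1) ×ˢ (Ioi (1:ℝ))) :=
      (isConnected_sphere hrank 0 zero_le_one).prod isConnected_Ioi
    have h2' := h1.image (fun p : (EuclideanSpace ℝ (Fin d)) × ℝ => p.2 • p.1)
      (continuous_snd.smul continuous_fst).continuousOn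
    convert h2' using 1
    ext x
    simp only [mem_image, mem_prod, mem_sphere_zero_iff_norm, mem_Ioi, hU₀def, mem_setOf_eq,
      Prod.exists]
    constructor
    · intro hx
      have hx0 : ‖x‖ ≠ 0 := by positivity
      refine ⟨‖x‖⁻¹ • x, ‖x‖, ⟨?_, hx⟩, ?_⟩
      · rw [norm_smul, norm_inv, norm_norm, inv_mul_cancel₀ hx0]
      · rw [smul_smul, mul_inv_cancel₀ hx0, one_smul]
    · rintro ⟨v, ρ, ⟨hv, hρ⟩, rfl⟩
      rw [norm_smul, hv, mul_one, Real.norm_eq_abs, abs_of_pos (lt_trans one_pos hρ)]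
      exact hρ
  have hU₀X : U₀ ⊆ Xᶜ := by
    intro x hx hxX
    have := mem_ball_zero_iff.mp (hXsub hxX)
    exact absurd hx (by simp [hU₀def]; linarith)
  have hU₀front : (U₀ ∩ frontier (Metric.ball (0 : EuclideanSpace ℝ (Fin d)) 2)).Nonempty := by
    rw [hfront]
    refine ⟨EuclideanSpace.single (Classical.arbitrary (Fin d)) (2:ℝ), ?_, ?_⟩
    · simp [hU₀def, EuclideanSpace.norm_single]
    · simp [mem_sphere_zero_iff_norm, EuclideanSpace.norm_single]
  unfold outerSupport
  rw [hclos]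
  ext x
  simp only [mem_diff, mem_sUnion, mem_setOf_eq, mem_closedBall_zero_iff]
  constructor
  · rintro ⟨hx2, hnot⟩
    by_contra hgt
    push_neg at hgt
    exact hnot ⟨U₀, ⟨hU₀X, hU₀open, hU₀conn, hU₀front⟩, hgt⟩
  · intro hx1
    refine ⟨by linarith, ?_⟩
    rintro ⟨U, ⟨hUX, hUo, hUc, y, hyU, hyf⟩, hxU⟩
    rw [hfront] at hyf
    have hy2 : ‖y‖ = 2 := mem_sphere_zero_iff_norm.mp hyf
    -- produce a point of U with norm < 1
    obtain ⟨ε, hε, hball⟩ := Metric.isOpen_iff.mp hUo x hxU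
    set δ : ℝ := min (ε/2) (1/2) with hδdef
    have hδpos : 0 < δ := lt_min (by linarith) one_half_pos
    have hδle : δ ≤ 1/2 := min_le_right _ _
    have hδε : δ < ε := lt_of_le_of_lt (min_le_left _ _) (by linarith)
    set u' := (1 - δ) • x with hu'def
    have hdist : dist u' x = δ * ‖x‖ := by
      rw [hu'def, dist_eq_norm]
      have : (1 - δ) • x - x = (-δ) • x := by
        rw [sub_smul, one_smul, neg_smul]; abel
      rw [this, norm_smul, Real.norm_eq_abs, abs_neg, abs_of_pos hδpos]
    have hu'U : u' ∈ U := hball (by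
      rw [Metric.mem_ball, hdist]
      calc δ * ‖x‖ ≤ δ * 1 := by nlinarith
        _ < ε := by linarith)
    have hu'n : ‖u'‖ < 1 := by
      rw [hu'def, norm_smul, Real.norm_eq_abs, abs_of_pos (by linarith : (0:ℝ) < 1 - δ)]
      nlinarith [norm_nonneg x]
    obtain ⟨j, hj⟩ := (hrlim.eventually (eventually_gt_nhds hu'n)).exists
    set ρ : ℝ := (r j + r' j) / 2 with hρdef
    have hρ1 : r j < ρ := by have := hrr' j; rw [hρdef]; linarith
    have hρ2 : ρ < r' j := by have := hrr' j; rw [hρdef]; linarith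
    have himg : IsConnected (norm '' U) := hUc.image norm continuous_norm.continuousOn
    have hord : OrdConnected (norm '' U) := himg.isPreconnected.ordConnected
    have hmem : ρ ∈ norm '' U := by
      have h1 : ‖u'‖ ∈ norm '' U := mem_image_of_mem _ hu'U
      have h2' : (2:ℝ) ∈ norm '' U := hy2 ▸ mem_image_of_mem _ hyU
      exact hord.out h1 h2' ⟨by linarith, by linarith [hr'1 j]⟩
    obtain ⟨z, hzU, hz⟩ := hmem
    exact hUX hzU (hann j z (by rw [hz]; exact hρ1) (by rw [hz]; exact hρ2))


theorem outerSupport_alternating_rings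
    (d : ℕ) (hd : 2 ≤ d)
    (Ω : Set (EuclideanSpace ℝ (Fin d)))
    (hΩ : Ω = Metric.ball (0 : EuclideanSpace ℝ (Fin d)) 2)
    (s s' t t' : ℕ → ℝ)
    (hs : ∀ j, s j ∈ Set.Ioo (0 : ℝ) 1) (hs' : ∀ j, s' j ∈ Set.Ioo (0 : ℝ) 1)
    (ht : ∀ j, t j ∈ Set.Ioo (0 : ℝ) 1) (ht' : ∀ j, t' j ∈ Set.Ioo (0 : ℝ) 1)
    (horder : ∀ j, s j < s' j ∧ s' j < t j ∧ t j < t' j ∧ t' j < s (j + 1))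
    (hslim : Tendsto s atTop (nhds 1)) (hs'lim : Tendsto s' atTop (nhds 1))
    (htlim : Tendsto t atTop (nhds 1)) (ht'lim : Tendsto t' atTop (nhds 1))
    (V W : ℕ → Set (EuclideanSpace ℝ (Fin d)))
    (hV : ∀ j, V j = {x : EuclideanSpace ℝ (Fin d) | s j < ‖x‖ ∧ ‖x‖ < s' j})
    (hW : ∀ j, W j = {x : EuclideanSpace ℝ (Fin d) | t j < ‖x‖ ∧ ‖x‖ < t' j})
    (Dp Dm : Set (EuclideanSpace ℝ (Fin d)))
    (hDp : Dp = ⋃ j, V j) (hDm : Dm = ⋃ j, W j) :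
    IsOpen Dp ∧ IsOpen Dm ∧ Disjoint Dp Dm ∧
      outerSupport Ω Dp = Metric.closedBall (0 : EuclideanSpace ℝ (Fin d)) 1 ∧
      outerSupport Ω Dm = Metric.closedBall (0 : EuclideanSpace ℝ (Fin d)) 1 ∧
      outerSupport Ω (Dp ∪ Dm) = Metric.closedBall (0 : EuclideanSpace ℝ (Fin d)) 1 := by
  subst hΩ
  have hopenV : ∀ j, IsOpen (V j) := fun j => by
    rw [hV, setOf_and]
    exact (isOpen_lt continuous_const continuous_norm).inter
      (isOpen_lt continuous_norm continuous_const)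
  have hopenW : ∀ j, IsOpen (W j) := fun j => by
    rw [hW, setOf_and]
    exact (isOpen_lt continuous_const continuous_norm).inter
      (isOpen_lt continuous_norm continuous_const)
  have hDpopen : IsOpen Dp := hDp ▸ isOpen_iUnion hopenV
  have hDmopen : IsOpen Dm := hDm ▸ isOpen_iUnion hopenW
  have hsmono : StrictMono s := strictMono_nat_of_lt_succ fun j => by
    obtain ⟨h1, h2, h3, h4⟩ := horder j; linarith
  have htmono : StrictMono t := strictMono_nat_of_lt_succ fun j => by
    obtain ⟨h1, h2, h3, h4⟩ := horder j
    obtain ⟨h5, h6, h7, h8⟩ := horder (j + 1); linarith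
  have hdisj : Disjoint Dp Dm := by
    rw [Set.disjoint_left]
    intro x hxp hxm
    rw [hDp, mem_iUnion] at hxp
    rw [hDm, mem_iUnion] at hxm
    obtain ⟨j, hj⟩ := hxp
    obtain ⟨k, hk⟩ := hxm
    rw [hV] at hj; rw [hW] at hk
    obtain ⟨hj1, hj2⟩ := hj
    obtain ⟨hk1, hk2⟩ := hk
    rcases le_or_gt j k with h | h
    · have : t j ≤ t k := htmono.monotone h
      have := (horder j).2.1
      linarith
    · have : s (k + 1) ≤ s j := hsmono.monotone h
      have := (horder k).2.2.2
      linarith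
  refine ⟨hDpopen, hDmopen, hdisj, ?_, ?_, ?_⟩
  · exact outerSupport_eq_closedBall_aux d hd Dp
      (by intro x hx
          rw [hDp, mem_iUnion] at hx
          obtain ⟨j, hj⟩ := hx
          rw [hV] at hj
          exact mem_ball_zero_iff.mpr (lt_trans hj.2 (hs' j).2))
      s s' (fun j => (horder j).1) (fun j => (hs' j).2) hslim
      (fun j x h1 h2 => hDp ▸ mem_iUnion.mpr ⟨j, (hV j) ▸ ⟨h1, h2⟩⟩)
  · exact outerSupport_eq_closedBall_aux d hd Dm
      (by intro x hx
          rw [hDm, mem_iUnion] at hx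
          obtain ⟨j, hj⟩ := hx
          rw [hW] at hj
          exact mem_ball_zero_iff.mpr (lt_trans hj.2 (ht' j).2))
      t t' (fun j => (horder j).2.2.1) (fun j => (ht' j).2) htlim
      (fun j x h1 h2 => hDm ▸ mem_iUnion.mpr ⟨j, (hW j) ▸ ⟨h1, h2⟩⟩)
  · exact outerSupport_eq_closedBall_aux d hd (Dp ∪ Dm)
      (by rintro x (hx | hx)
          · rw [hDp, mem_iUnion] at hx
            obtain ⟨j, hj⟩ := hx
            rw [hV] at hj
            exact mem_ball_zero_iff.mpr (lt_trans hj.2 (hs' j).2)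
          · rw [hDm, mem_iUnion] at hx
            obtain ⟨j, hj⟩ := hx
            rw [hW] at hj
            exact mem_ball_zero_iff.mpr (lt_trans hj.2 (ht' j).2))
      s s' (fun j => (horder j).1) (fun j => (hs' j).2) hslim
      (fun j x h1 h2 => Or.inl (hDp ▸ mem_iUnion.mpr ⟨j, (hV j) ▸ ⟨h1, h2⟩⟩))
end
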